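/- arXiv:2007.10198 — 9 statements merged into one kernel-verified Lean document; each statement's English description precedes it below -/
import Mathlib

section
/- Let B be a real number with 0 ≤ B ≤ √3, and set α = (1/√2)·√(1 − √(1 − B²/3)). Then the drift field J(x,y) = −(y + B·x + 3x²y − y³) satisfies J(x, α) ≤ 0 for every x ∈ ℝ and J(x, −α) ≥ 0 for every x ∈ ℝ. -/
/-- For `0 ≤ B ≤ √3` and `α = (1/√2)·√(1 − √(1 − B²/3))`, the drift
`J(x,y) = −(y + B·x + 3x²y − y³)` satisfies `J(x,α) ≤ 0` and `J(x,−α) ≥ 0` for all real `x`. -/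
theorem stmt0 (B : ℝ) (hB0 : 0 ≤ B) (hB : B ≤ Real.sqrt 3)
    (α : ℝ) (hα : α = (1 / Real.sqrt 2) * Real.sqrt (1 - Real.sqrt (1 - B ^ 2 / 3)))
    (J : ℝ → ℝ → ℝ) (hJ : ∀ x y : ℝ, J x y = -(y + B * x + 3 * x ^ 2 * y - y ^ 3)) :
    (∀ x : ℝ, J x α ≤ 0) ∧ (∀ x : ℝ, J x (-α) ≥ 0) := by
  set s := Real.sqrt (1 - B ^ 2 / 3) with hs
  have hB2 : B ^ 2 ≤ 3 := by
    have h3 : (Real.sqrt 3) ^ 2 = 3 := Real.sq_sqrt (by norm_num)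
    nlinarith [Real.sqrt_nonneg 3]
  have harg : (0:ℝ) ≤ 1 - B ^ 2 / 3 := by linarith
  have hs2 : s ^ 2 = 1 - B ^ 2 / 3 := Real.sq_sqrt harg
  have hs1 : s ≤ 1 := by
    rw [hs]
    calc Real.sqrt (1 - B ^ 2 / 3) ≤ Real.sqrt 1 := Real.sqrt_le_sqrt (by nlinarith)
    _ = 1 := Real.sqrt_one
  have hs0 : 0 ≤ s := Real.sqrt_nonneg _
  have hα0 : 0 ≤ α := by
    rw [hα]
    positivity
  have hα2 : α ^ 2 = (1 - s) / 2 := by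
    rw [hα]
    have h2 : (Real.sqrt 2) ^ 2 = 2 := Real.sq_sqrt (by norm_num)
    have h1s : (Real.sqrt (1 - s)) ^ 2 = 1 - s := Real.sq_sqrt (by linarith)
    field_simp
    nlinarith [Real.sqrt_nonneg 2]
  have hid : 12 * α ^ 2 * (1 - α ^ 2) = B ^ 2 := by
    rw [hα2]; nlinarith
  -- key inequality
  have key : ∀ x : ℝ, 0 ≤ α + B * x + 3 * x ^ 2 * α - α ^ 3 := by
    intro x
    rcases eq_or_lt_of_le hα0 with h0 | hpos
    · have hB0' : B = 0 := by nlinarith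
      rw [← h0, hB0']; ring_nf; exact le_refl 0
    · have h12 : 12 * α * (α + B * x + 3 * x ^ 2 * α - α ^ 3) = (6 * α * x + B) ^ 2 := by
        nlinarith [sq_nonneg (6 * α * x + B)]
      nlinarith [sq_nonneg (6 * α * x + B)]
  constructor
  · intro x
    rw [hJ]
    have := key x
    nlinarith
  · intro x
    rw [hJ]
    have := key (-x)
    nlinarith
end

section
/- Let B be a real number with 0 ≤ B ≤ √3 and α = (1/√2)·√(1 − √(1 − B²/3)). Let x : [0,∞) → ℝ be continuous and let y : [0,∞) → ℝ be differentiable with y′(t) = J(x(t), y(t)) for all t ≥ 0, where J(x,y) = −(y + B·x + 3x²y − y³). If |y(0)| ≤ α, then |y(t)| ≤ α for all t ≥ 0. -/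
open Set

/-- One-sided forward invariance via a Grönwall argument: if `y` is differentiable on
`[0,∞)` with derivative `g`, and whenever `y t ≥ α` the derivative satisfies
`g t ≤ (y t ^ 2 + y t * α + α ^ 2) * (y t - α)`, then `y 0 ≤ α` implies `y t ≤ α`
for all `t ≥ 0`. -/
lemma one_sided_invariance (α : ℝ) (hα0 : 0 ≤ α) (y g : ℝ → ℝ)
    (hy : ∀ t : ℝ, 0 ≤ t → HasDerivAt y (g t) t)
    (hb : ∀ t : ℝ, 0 ≤ t → α ≤ y t → g t ≤ (y t ^ 2 + y t * α + α ^ 2) * (y t - α))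
    (h0 : y 0 ≤ α) : ∀ t : ℝ, 0 ≤ t → y t ≤ α := by
  intro T hT
  by_contra hlt
  push_neg at hlt
  -- y is continuous on [0, ∞)
  have ycont : ∀ t : ℝ, 0 ≤ t → ContinuousAt y t := fun t ht => (hy t ht).continuousAt
  have ycontOn : ContinuousOn y (Icc 0 T) := fun t ht =>
    (ycont t ht.1).continuousWithinAt
  -- the set of times in [0,T] where y ≤ α
  set S : Set ℝ := {t | t ∈ Icc 0 T ∧ y t ≤ α} with hS
  have hSsub : S ⊆ Icc 0 T := fun t ht => ht.1
  have hSne : S.Nonempty := ⟨0, ⟨le_refl 0, hT⟩, h0⟩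
  have hSclosed : IsClosed S := by
    have : S = Icc 0 T ∩ y ⁻¹' (Iic α) := by
      ext t
      simp only [hS, Set.mem_setOf_eq, Set.mem_inter_iff, Set.mem_preimage, Set.mem_Iic]
    rw [this]
    exact ContinuousOn.preimage_isClosed_of_isClosed ycontOn isClosed_Icc isClosed_Iic
  have hScompact : IsCompact S := (isCompact_Icc).of_isClosed_subset hSclosed hSsub
  obtain ⟨s, hsS, hsmax⟩ := hScompact.exists_isGreatest hSne
  have hs0 : 0 ≤ s := hsS.1.1
  have hsT : s ≤ T := hsS.1.2
  have hys : y s ≤ α := hsS.2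
  have hsTlt : s < T := lt_of_le_of_ne hsT (by
    rintro rfl
    exact absurd hys (not_le.mpr hlt))
  -- strictly above α after s
  have habove : ∀ t, s < t → t ≤ T → α < y t := by
    intro t hst htT
    by_contra h
    push_neg at h
    have : t ∈ S := ⟨⟨hs0.trans hst.le, htT⟩, h⟩
    exact absurd (hsmax this) (not_le.mpr hst)
  -- y s = α
  have hyge : α ≤ y s := by
    have htend : Filter.Tendsto y (nhdsWithin s (Ioi s)) (nhds (y s)) :=
      ((ycont s hs0).tendsto).mono_left nhdsWithin_le_nhds
    refine ge_of_tendsto htend ?_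
    filter_upwards [Ioc_mem_nhdsGT_of_mem ⟨le_refl s, hsTlt⟩] with t ht
    exact (habove t ht.1 ht.2).le
  have hyseq : y s = α := le_antisymm hys hyge
  -- y ≥ α on [s, T]
  have hge : ∀ t, t ∈ Icc s T → α ≤ y t := by
    intro t ht
    rcases eq_or_lt_of_le ht.1 with rfl | h
    · exact hyge
    · exact (habove t h ht.2).le
  -- bound y on [s, T]
  have ycontOn' : ContinuousOn y (Icc s T) := fun t ht =>
    (ycont t (hs0.trans ht.1)).continuousWithinAt
  obtain ⟨M, hM⟩ := (isCompact_Icc).exists_bound_of_continuousOn ycontOn'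
  have hαM : α ≤ M := by
    have := hM s ⟨le_refl s, hsT⟩
    rw [hyseq] at this
    calc α ≤ |α| := le_abs_self α
    _ = ‖α‖ := rfl
    _ ≤ M := this
  set K : ℝ := 3 * M ^ 2 with hK
  -- Grönwall
  have key : ∀ t ∈ Icc s T, y t - α ≤ gronwallBound 0 K 0 (t - s) := by
    apply le_gronwallBound_of_liminf_deriv_right_le (f' := g)
    · exact (ycontOn'.sub continuousOn_const)
    · intro t ht r hr
      have hd : HasDerivWithinAt (fun u => y u - α) (g t) (Ici t) t :=
        ((hy t (hs0.trans ht.1)).sub_const α).hasDerivWithinAt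
      exact hd.liminf_right_slope_le hr
    · rw [hyseq]; simp
    · intro t ht
      have hyt : α ≤ y t := hge t ⟨ht.1, ht.2.le⟩
      have hbd := hb t (hs0.trans ht.1) hyt
      have hMy : |y t| ≤ M := hM t ⟨ht.1, ht.2.le⟩
      have hy2 : -M ≤ y t ∧ y t ≤ M := abs_le.mp hMy
      have hcoef : y t ^ 2 + y t * α + α ^ 2 ≤ K := by
        rw [hK]
        nlinarith [hy2.2, hyt, hα0, hαM, sq_nonneg (y t - M), sq_nonneg (α - M)]
      have hsub : 0 ≤ y t - α := sub_nonneg.mpr hyt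
      calc g t ≤ (y t ^ 2 + y t * α + α ^ 2) * (y t - α) := hbd
      _ ≤ K * (y t - α) := mul_le_mul_of_nonneg_right hcoef hsub
      _ = K * (y t - α) + 0 := by ring
  have := key T ⟨hsT, le_refl T⟩
  rw [gronwallBound_ε0_δ0] at this
  linarith

/-- Forward invariance of the strip `|y| ≤ α` for the imaginary drift of the complex
Langevin dynamics of the quartic model: if `y′(t) = J(x(t), y(t))` for `t ≥ 0` along a
continuous path `x`, and `|y(0)| ≤ α`, then `|y(t)| ≤ α` for all `t ≥ 0`. -/
theorem stmt1 (B : ℝ) (hB0 : 0 ≤ B) (hB : B ≤ Real.sqrt 3)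
    (α : ℝ) (hα : α = (1 / Real.sqrt 2) * Real.sqrt (1 - Real.sqrt (1 - B ^ 2 / 3)))
    (J : ℝ → ℝ → ℝ) (hJ : ∀ x y : ℝ, J x y = -(y + B * x + 3 * x ^ 2 * y - y ^ 3))
    (x y : ℝ → ℝ)
    (hx : ContinuousOn x (Set.Ici (0 : ℝ)))
    (hy : ∀ t : ℝ, 0 ≤ t → HasDerivAt y (J (x t) (y t)) t)
    (h0 : |y 0| ≤ α) :
    ∀ t : ℝ, 0 ≤ t → |y t| ≤ α := by
  -- basic facts about α
  have hα0 : 0 ≤ α := by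
    rw [hα]
    positivity
  have hB3 : B ^ 2 ≤ 3 := by
    nlinarith [Real.sq_sqrt (by norm_num : (3:ℝ) ≥ 0), Real.sqrt_nonneg 3]
  have hc0 : 0 ≤ 1 - B ^ 2 / 3 := by linarith
  have hc1 : Real.sqrt (1 - B ^ 2 / 3) ≤ 1 := by
    calc Real.sqrt (1 - B ^ 2 / 3) ≤ Real.sqrt 1 := Real.sqrt_le_sqrt (by nlinarith [sq_nonneg B])
    _ = 1 := Real.sqrt_one
  have hcsq : Real.sqrt (1 - B ^ 2 / 3) ^ 2 = 1 - B ^ 2 / 3 := Real.sq_sqrt hc0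
  have hαsq : α ^ 2 = (1 - Real.sqrt (1 - B ^ 2 / 3)) / 2 := by
    rw [hα, mul_pow, div_pow, one_pow, Real.sq_sqrt (by norm_num : (2:ℝ) ≥ 0),
      Real.sq_sqrt (by linarith)]
    ring
  have hprod : 3 * α ^ 2 * (1 - α ^ 2) = B ^ 2 / 4 := by
    rw [hαsq]
    nlinarith [hcsq]
  -- the quadratic in x is nonnegative
  have hq : ∀ u : ℝ, 0 ≤ α + B * u + 3 * u ^ 2 * α - α ^ 3 := by
    intro u
    rcases eq_or_lt_of_le hα0 with heq | hpos
    · have hBz : B = 0 := by nlinarith [hprod]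
      rw [← heq, hBz]; norm_num
    · nlinarith [sq_nonneg (6 * α * u + B), mul_pos hpos hpos]
  -- upper bound: y t ≤ α
  have hupper : ∀ t : ℝ, 0 ≤ t → y t ≤ α := by
    apply one_sided_invariance α hα0 y (fun t => J (x t) (y t)) hy
    · intro t ht hyt
      rw [hJ]
      nlinarith [hq (x t), mul_nonneg (sq_nonneg (x t)) (sub_nonneg.mpr hyt),
        sub_nonneg.mpr hyt]
    · exact (abs_le.mp h0).2
  -- lower bound: -α ≤ y t
  have hlower : ∀ t : ℝ, 0 ≤ t → -(y t) ≤ α := by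
    apply one_sided_invariance α hα0 (fun t => -(y t)) (fun t => -(J (x t) (y t)))
      (fun t ht => (hy t ht).neg)
    · intro t ht hyt
      rw [hJ]
      nlinarith [hq (-(x t)), mul_nonneg (sq_nonneg (x t)) (sub_nonneg.mpr hyt),
        sub_nonneg.mpr hyt]
    · exact neg_le.mpr (abs_le.mp h0).1
  intro t ht
  exact abs_le.mpr ⟨neg_le.mp (by simpa using hlower t ht), hupper t ht⟩
end

section
/- Let δ > 0, let α : (0,δ) → ℝ be strictly decreasing with α(ε) > 0 for all ε, and let P : (0,δ) → (ℝ → ℝ) be a family of functions such that for every ε ∈ (0,δ) the topological support of P(ε) (the closure of the set where P(ε) is nonzero) equals the interval [−α(ε), α(ε)]. Then there does not exist a sequence of functions P₀, P₁, P₂, … : ℝ → ℝ such that for every ε ∈ (0,δ) and every y ∈ ℝ the series Σₙ εⁿ·Pₙ(y) converges to P(ε)(y). -/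
open Filter
open scoped ENNReal NNReal

/-- If the topological support of a family `P ε` of functions is exactly `[−α ε, α ε]`
with `α` strictly decreasing and positive on `(0, δ)`, then no sequence of functions
`P₀, P₁, …` can have `Σₙ εⁿ Pₙ(y)` converging pointwise to `P ε y` for all `ε ∈ (0, δ)`. -/
theorem stmt2 (δ : ℝ) (hδ : 0 < δ) (α : ℝ → ℝ)
    (hαpos : ∀ ε ∈ Set.Ioo (0 : ℝ) δ, 0 < α ε)
    (hαdec : StrictAntiOn α (Set.Ioo (0 : ℝ) δ))
    (P : ℝ → ℝ → ℝ)
    (hsupp : ∀ ε ∈ Set.Ioo (0 : ℝ) δ, tsupport (P ε) = Set.Icc (-(α ε)) (α ε)) :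
    ¬ ∃ Q : ℕ → ℝ → ℝ, ∀ ε ∈ Set.Ioo (0 : ℝ) δ, ∀ y : ℝ,
      Tendsto (fun N : ℕ => ∑ n ∈ Finset.range N, ε ^ n * Q n y) atTop (nhds (P ε y)) := by
  rintro ⟨Q, hQ⟩
  have h1 : (δ/4) ∈ Set.Ioo (0:ℝ) δ := ⟨by linarith, by linarith⟩
  have h2 : (δ/2) ∈ Set.Ioo (0:ℝ) δ := ⟨by linarith, by linarith⟩
  have h3 : (3*δ/4) ∈ Set.Ioo (0:ℝ) δ := ⟨by linarith, by linarith⟩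
  have hε3pos : (0:ℝ) < 3*δ/4 := by linarith
  -- key step: for every y above α(δ/2), P(δ/4) y = 0
  have key : ∀ y : ℝ, α (δ/2) < y → P (δ/4) y = 0 := by
    intro y hy
    set a : ℕ → ℝ := fun n => Q n y with ha
    -- P ε y = 0 for ε ∈ (δ/2, δ)
    have hPz : ∀ ε, δ/2 < ε → ε < δ → P ε y = 0 := by
      intro ε hε1 hε2
      have hεmem : ε ∈ Set.Ioo (0:ℝ) δ := ⟨by linarith, hε2⟩
      have hαε : α ε < α (δ/2) := hαdec h2 hεmem hε1
      apply image_eq_zero_of_notMem_tsupport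
      rw [hsupp ε hεmem]
      intro hmem
      exact absurd hmem.2 (by linarith)
    -- the terms at ε₃ = 3δ/4 tend to zero, hence are bounded
    have hQ3 := hQ _ h3 y
    have hterm : Tendsto (fun n : ℕ => (3*δ/4) ^ n * a n) atTop (nhds 0) := by
      have := ((hQ3.comp (tendsto_add_atTop_nat 1)).sub hQ3)
      rw [sub_self] at this
      convert this using 2 with n
      simp [Function.comp, Finset.sum_range_succ, ha]
    obtain ⟨C, hC⟩ : ∃ C, ∀ n, |(3*δ/4) ^ n * a n| ≤ C := by
      obtain ⟨C, hC⟩ := (hterm.abs.bddAbove_range)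
      exact ⟨C, fun n => hC ⟨n, rfl⟩⟩
    set p := FormalMultilinearSeries.ofScalars ℝ a with hp
    have hrad : ENNReal.ofReal (3*δ/4) ≤ p.radius := by
      have : (((3*δ/4 : ℝ).toNNReal : ℝ≥0∞)) ≤ p.radius := by
        apply p.le_radius_of_bound C
        intro n
        rw [FormalMultilinearSeries.ofScalars_norm]
        have : ((3*δ/4 : ℝ).toNNReal : ℝ) = 3*δ/4 := Real.coe_toNNReal _ hε3pos.le
        rw [this]
        calc ‖a n‖ * (3*δ/4) ^ n = |(3*δ/4) ^ n * a n| := by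
              rw [abs_mul, abs_pow, abs_of_nonneg hε3pos.le, Real.norm_eq_abs, mul_comm]
          _ ≤ C := hC n
      rwa [ENNReal.ofReal]
    -- identify the sum with P ε y on (0, 3δ/4)
    have hmemball : ∀ ε : ℝ, |ε| < 3*δ/4 → ε ∈ Metric.eball (0:ℝ) p.radius := by
      intro ε hε
      refine EMetric.mem_ball.2 (lt_of_lt_of_le ?_ hrad)
      rw [edist_zero_right, ← ofReal_norm]
      exact ENNReal.ofReal_lt_ofReal_iff hε3pos |>.2 hε
    have hsum_eq : ∀ ε : ℝ, |ε| < 3*δ/4 → 0 < ε → ε < δ → p.sum ε = P ε y := by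
      intro ε hε hε0 hεδ
      have hs := (p.hasSum (hmemball ε hε)).tendsto_sum_nat
      have heq : (fun N : ℕ => ∑ n ∈ Finset.range N, p n fun _ => ε)
          = fun N : ℕ => ∑ n ∈ Finset.range N, ε ^ n * Q n y := by
        funext N
        refine Finset.sum_congr rfl fun n _ => ?_
        rw [hp, FormalMultilinearSeries.ofScalars_apply_eq, smul_eq_mul, mul_comm, ha]
      rw [heq] at hs
      exact tendsto_nhds_unique hs (hQ ε ⟨hε0, hεδ⟩ y)
    -- p.sum is analytic on the ball of radius 3δ/4
    have hball : HasFPowerSeriesOnBall p.sum p 0 (ENNReal.ofReal (3*δ/4)) :=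
      (p.hasFPowerSeriesOnBall (lt_of_lt_of_le (by simp [ENNReal.ofReal_pos, hε3pos]) hrad)).mono
        (by simp [ENNReal.ofReal_pos, hε3pos]) hrad
    have hanalytic : AnalyticOnNhd ℝ p.sum (Metric.eball (0:ℝ) (ENNReal.ofReal (3*δ/4))) :=
      hball.analyticOnNhd
    have hmemball' : ∀ ε : ℝ, |ε| < 3*δ/4 → ε ∈ Metric.eball (0:ℝ) (ENNReal.ofReal (3*δ/4)) := by
      intro ε hε
      refine EMetric.mem_ball.2 ?_
      rw [edist_zero_right, ← ofReal_norm]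
      exact ENNReal.ofReal_lt_ofReal_iff hε3pos |>.2 hε
    -- p.sum vanishes near z₀ = 5δ/8
    have hz₀ : (5*δ/8 : ℝ) ∈ Metric.eball (0:ℝ) (ENNReal.ofReal (3*δ/4)) :=
      hmemball' _ (by rw [abs_of_pos (by linarith)]; linarith)
    have hev : p.sum =ᶠ[nhds (5*δ/8 : ℝ)] 0 := by
      have hnb : Set.Ioo (δ/2) (3*δ/4) ∈ nhds (5*δ/8 : ℝ) :=
        Ioo_mem_nhds (by linarith) (by linarith)
      filter_upwards [hnb] with ε hε
      have habs : |ε| < 3*δ/4 := by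
        rw [abs_of_pos (by linarith [hε.1] : (0:ℝ) < ε)]; exact hε.2
      rw [hsum_eq ε habs (by linarith [hε.1]) (by linarith [hε.2])]
      exact hPz ε hε.1 (by linarith [hε.2])
    have hzero : Set.EqOn p.sum 0 (Metric.eball (0:ℝ) (ENNReal.ofReal (3*δ/4))) :=
      hanalytic.eqOn_zero_of_preconnected_of_eventuallyEq_zero
        (Metric.emetric_ball (x:=(0:ℝ)) (ε:=3*δ/4) ▸ (convex_ball (0:ℝ) (3*δ/4)).isPreconnected) hz₀ hev
    -- conclude
    have hmem14 : (δ/4 : ℝ) ∈ Metric.eball (0:ℝ) (ENNReal.ofReal (3*δ/4)) :=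
      hmemball' _ (by rw [abs_of_pos (by linarith)]; linarith)
    have := hzero hmem14
    rw [← hsum_eq (δ/4) (by rw [abs_of_pos (by linarith)]; linarith) (by linarith) (by linarith)]
    exact this
  -- contradiction with the support of P(δ/4)
  have hα21 : α (δ/2) < α (δ/4) := hαdec h1 h2 (by linarith)
  set z := (α (δ/2) + α (δ/4)) / 2 with hz
  have hz1 : α (δ/2) < z := by rw [hz]; linarith
  have hz2 : z < α (δ/4) := by rw [hz]; linarith
  have hzsupp : z ∈ tsupport (P (δ/4)) := by
    rw [hsupp _ h1]
    constructor
    · have := hαpos _ h2; linarith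
    · linarith
  -- but P(δ/4) vanishes on an open neighborhood of z
  have hU : Set.Ioo (α (δ/2)) (α (δ/4)) ∈ nhds z := Ioo_mem_nhds hz1 hz2
  have : z ∉ tsupport (P (δ/4)) := by
    apply notMem_tsupport_iff_eventuallyEq.2 ?_
    filter_upwards [hU] with w hw
    exact key w hw.1
  exact this hzsupp
end

section
/- Let S, O : ℂ → ℂ be entire functions, and define K(x,y) = Re(−S′(x+iy)) and Jv(x,y) = Im(−S′(x+iy)). Let p : ℝ → ℝ be a probability density and fix t > 0. Suppose: (i) 𝒪 : ℝ×ℝ×[0,t] → ℂ is continuously differentiable in time and twice continuously differentiable in space, solves the backward Kolmogorov equation ∂_τ𝒪 = ∂ₓₓ𝒪 + K·∂ₓ𝒪 + Jv·∂_y𝒪 with initial data 𝒪(x,y,0) = O(x+iy), and satisfies the Cauchy–Riemann relation ∂_y𝒪 = i·∂ₓ𝒪 everywhere; (ii) ρ : ℝ×[0,t] → ℂ is continuously differentiable in time and twice continuously differentiable in space and solves ∂_sρ = ∂ₓ(S′(x)·ρ) + ∂ₓₓρ with ρ(x,0) = p(x); (iii) P : ℝ×ℝ×[0,t] → ℝ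 is nonnegative and satisfies, for every τ ∈ [0,t], ∬ 𝒪(x,y,τ)·P(x,y,t−τ) dx dy = ∬ O(x+iy)·P(x,y,t) dx dy, and moreover ∬ 𝒪(x,y,t)·P(x,y,0) dx dy = ∫ 𝒪(x,0,t)·p(x) dx; (iv) for every τ ∈ [0,t] the boundary terms vanish: 𝒪(X,0,τ)·∂ₓρ(X,t−τ) − ρ(X,t−τ)·∂ₓ𝒪(X,0,τ) → 0 and S′(X)·𝒪(X,0,τ)·ρ(X,t−τ) → 0 as |X| → ∞; (v) all the integrals above converge absolutely, and for F(τ) = ∫ ρ(x,t−τ)·𝒪(x,0,τ) dx differentiation under the integral sign in τ is valid on [0,t]. Then ∫ ρ(x,t)·O(x) dx = ∬ P(x,y,t)·O(x+iy) dx dy. -/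
open MeasureTheory Filter Complex

/-- Validity of the one-dimensional complex Langevin method: under the consistency
identity (H1), the boundary decay (H3), and the stated regularity/integrability
assumptions, the expectation of the observable `O` against the complex density `ρ`
equals the expectation of `O(x+iy)` against the real density `P`. -/
theorem stmt3
    -- entire action and observable
    (S O : ℂ → ℂ) (hS : Differentiable ℂ S) (hO : Differentiable ℂ O)
    -- drift fields
    (K Jv : ℝ → ℝ → ℝ)
    (hK : ∀ x y : ℝ, K x y = (-(deriv S (x + y * I))).re)
    (hJv : ∀ x y : ℝ, Jv x y = (-(deriv S (x + y * I))).im)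
    -- probability density for the initial data
    (p : ℝ → ℝ) (hp0 : ∀ x, 0 ≤ p x) (hp1 : ∫ x : ℝ, p x = 1)
    (t : ℝ) (ht : 0 < t)
    -- (i) backward Kolmogorov solution 𝒪 with its partial derivatives
    (𝒪 𝒪x 𝒪y 𝒪xx 𝒪t : ℝ → ℝ → ℝ → ℂ)
    (h𝒪x : ∀ x y τ : ℝ, HasDerivAt (fun u => 𝒪 u y τ) (𝒪x x y τ) x)
    (h𝒪y : ∀ x y τ : ℝ, HasDerivAt (fun u => 𝒪 x u τ) (𝒪y x y τ) y)
    (h𝒪xx : ∀ x y τ : ℝ, HasDerivAt (fun u => 𝒪x u y τ) (𝒪xx x y τ) x)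
    (h𝒪xC : ∀ τ ∈ Set.Icc (0 : ℝ) t, Continuous fun q : ℝ × ℝ => 𝒪x q.1 q.2 τ)
    (h𝒪xxC : ∀ τ ∈ Set.Icc (0 : ℝ) t, Continuous fun q : ℝ × ℝ => 𝒪xx q.1 q.2 τ)
    (h𝒪t : ∀ x y : ℝ, ∀ τ ∈ Set.Icc (0 : ℝ) t, HasDerivAt (fun u => 𝒪 x y u) (𝒪t x y τ) τ)
    (h𝒪tC : ∀ x y : ℝ, ContinuousOn (fun u => 𝒪t x y u) (Set.Icc (0 : ℝ) t))
    (hBKE : ∀ x y : ℝ, ∀ τ ∈ Set.Icc (0 : ℝ) t,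
      𝒪t x y τ = 𝒪xx x y τ + (K x y : ℂ) * 𝒪x x y τ + (Jv x y : ℂ) * 𝒪y x y τ)
    (h𝒪init : ∀ x y : ℝ, 𝒪 x y 0 = O (x + y * I))
    (hCR : ∀ x y τ : ℝ, 𝒪y x y τ = I * 𝒪x x y τ)
    -- (ii) complex Fokker–Planck solution ρ with its partial derivatives
    (ρ ρx ρxx ρs : ℝ → ℝ → ℂ)
    (hρx : ∀ x s : ℝ, HasDerivAt (fun u => ρ u s) (ρx x s) x)
    (hρxx : ∀ x s : ℝ, HasDerivAt (fun u => ρx u s) (ρxx x s) x)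
    (hρxC : ∀ s ∈ Set.Icc (0 : ℝ) t, Continuous fun x => ρx x s)
    (hρxxC : ∀ s ∈ Set.Icc (0 : ℝ) t, Continuous fun x => ρxx x s)
    (hρs : ∀ x : ℝ, ∀ s ∈ Set.Icc (0 : ℝ) t, HasDerivAt (fun u => ρ x u) (ρs x s) s)
    (hρsC : ∀ x : ℝ, ContinuousOn (fun u => ρs x u) (Set.Icc (0 : ℝ) t))
    (hFPE : ∀ x : ℝ, ∀ s ∈ Set.Icc (0 : ℝ) t,
      ρs x s = deriv (deriv S) x * ρ x s + deriv S x * ρx x s + ρxx x s)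
    (hρinit : ∀ x : ℝ, ρ x 0 = (p x : ℂ))
    -- (iii) the real density P generated by the complex Langevin process
    (P : ℝ → ℝ → ℝ → ℝ) (hPpos : ∀ x y s : ℝ, 0 ≤ P x y s)
    (hH1 : ∀ τ ∈ Set.Icc (0 : ℝ) t,
      ∫ q : ℝ × ℝ, 𝒪 q.1 q.2 τ * (P q.1 q.2 (t - τ) : ℂ)
        = ∫ q : ℝ × ℝ, O (q.1 + q.2 * I) * (P q.1 q.2 t : ℂ))
    (hPinit : ∫ q : ℝ × ℝ, 𝒪 q.1 q.2 t * (P q.1 q.2 0 : ℂ) = ∫ x : ℝ, 𝒪 x 0 t * (p x : ℂ))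
    -- (iv) vanishing boundary terms as |X| → ∞
    (hbd1 : ∀ τ ∈ Set.Icc (0 : ℝ) t,
      Tendsto (fun X : ℝ => 𝒪 X 0 τ * ρx X (t - τ) - ρ X (t - τ) * 𝒪x X 0 τ)
        (cocompact ℝ) (nhds 0))
    (hbd2 : ∀ τ ∈ Set.Icc (0 : ℝ) t,
      Tendsto (fun X : ℝ => deriv S X * 𝒪 X 0 τ * ρ X (t - τ)) (cocompact ℝ) (nhds 0))
    -- (v) absolute convergence of all integrals involved
    (hint1 : ∀ τ ∈ Set.Icc (0 : ℝ) t, Integrable (fun x : ℝ => ρ x (t - τ) * 𝒪 x 0 τ))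
    (hint2 : ∀ τ ∈ Set.Icc (0 : ℝ) t,
      Integrable (fun x : ℝ => ρ x (t - τ) * 𝒪t x 0 τ - ρs x (t - τ) * 𝒪 x 0 τ))
    (hint3 : ∀ τ ∈ Set.Icc (0 : ℝ) t,
      Integrable (fun q : ℝ × ℝ => 𝒪 q.1 q.2 τ * (P q.1 q.2 (t - τ) : ℂ)))
    (hint4 : Integrable (fun q : ℝ × ℝ => O (q.1 + q.2 * I) * (P q.1 q.2 t : ℂ)))
    (hint5 : Integrable (fun x : ℝ => ρ x t * O x))
    -- (v) differentiation under the integral sign for F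
    (hF : ∀ τ ∈ Set.Icc (0 : ℝ) t,
      HasDerivAt (fun u : ℝ => ∫ x : ℝ, ρ x (t - u) * 𝒪 x 0 u)
        (∫ x : ℝ, (ρ x (t - τ) * 𝒪t x 0 τ - ρs x (t - τ) * 𝒪 x 0 τ)) τ) :
    ∫ x : ℝ, ρ x t * O x = ∫ q : ℝ × ℝ, (P q.1 q.2 t : ℂ) * O (q.1 + q.2 * I) := by

  classical
  -- `deriv S` is differentiable (S is entire)
  have hSder : Differentiable ℂ (deriv S) := by
    intro z
    have hA : AnalyticOnNhd ℂ S Set.univ := fun w _ => hS.analyticAt w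
    exact (hA.deriv z trivial).differentiableAt
  -- On the real axis the BKE drift is -S'(x)
  have hdrift : ∀ x : ℝ, (K x 0 : ℂ) + (Jv x 0 : ℂ) * I = -(deriv S x) := by
    intro x
    rw [hK, hJv, show ((x:ℝ):ℂ) + ((0:ℝ):ℂ) * I = (x:ℂ) by simp]
    exact Complex.re_add_im _
  -- hence 𝒪t x 0 τ = 𝒪xx x 0 τ - S'(x) * 𝒪x x 0 τ
  have hBKE0 : ∀ x : ℝ, ∀ τ ∈ Set.Icc (0:ℝ) t,
      𝒪t x 0 τ = 𝒪xx x 0 τ - deriv S x * 𝒪x x 0 τ := by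
    intro x τ hτ
    have h := hBKE x 0 τ hτ
    rw [hCR x 0 τ] at h
    rw [h]
    linear_combination 𝒪x x 0 τ * hdrift x
  -- the key vanishing integral
  have hzero : ∀ τ ∈ Set.Icc (0:ℝ) t,
      (∫ x : ℝ, (ρ x (t - τ) * 𝒪t x 0 τ - ρs x (t - τ) * 𝒪 x 0 τ)) = 0 := by
    intro τ hτ
    set g : ℝ → ℂ := fun x =>
      ρ x (t - τ) * 𝒪x x 0 τ - ρx x (t - τ) * 𝒪 x 0 τ
        - deriv S x * (ρ x (t - τ) * 𝒪 x 0 τ) with hg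
    have hgderiv : ∀ x : ℝ,
        HasDerivAt g (ρ x (t - τ) * 𝒪t x 0 τ - ρs x (t - τ) * 𝒪 x 0 τ) x := by
      intro x
      have hS'x : HasDerivAt (fun u : ℝ => deriv S u) (deriv (deriv S) x) x :=
        ((hSder (x : ℂ)).hasDerivAt).comp_ofReal
      have h1 : HasDerivAt (fun u : ℝ => ρ u (t - τ) * 𝒪x u 0 τ)
          (ρx x (t - τ) * 𝒪x x 0 τ + ρ x (t - τ) * 𝒪xx x 0 τ) x :=
        (hρx x (t - τ)).mul (h𝒪xx x 0 τ)
      have h2 : HasDerivAt (fun u : ℝ => ρx u (t - τ) * 𝒪 u 0 τ)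
          (ρxx x (t - τ) * 𝒪 x 0 τ + ρx x (t - τ) * 𝒪x x 0 τ) x :=
        (hρxx x (t - τ)).mul (h𝒪x x 0 τ)
      have h3 : HasDerivAt (fun u : ℝ => deriv S u * (ρ u (t - τ) * 𝒪 u 0 τ))
          (deriv (deriv S) x * (ρ x (t - τ) * 𝒪 x 0 τ)
            + deriv S x * (ρx x (t - τ) * 𝒪 x 0 τ + ρ x (t - τ) * 𝒪x x 0 τ)) x :=
        hS'x.mul ((hρx x (t - τ)).mul (h𝒪x x 0 τ))
      have h := (h1.sub h2).sub h3
      convert h using 1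
      · rfl
      · rfl
      rw [hBKE0 x τ hτ, hFPE x (t - τ) ⟨by linarith [hτ.2], by linarith [hτ.1]⟩]
      ring
    have hgbot : Tendsto g atBot (nhds 0) := by
      have hc : Tendsto g (cocompact ℝ) (nhds 0) := by
        have e1 := hbd1 τ hτ
        have e2 := hbd2 τ hτ
        have : Tendsto (fun X : ℝ =>
            -(𝒪 X 0 τ * ρx X (t - τ) - ρ X (t - τ) * 𝒪x X 0 τ)
              - deriv S X * 𝒪 X 0 τ * ρ X (t - τ)) (cocompact ℝ) (nhds 0) := by
          have := (e1.neg).sub e2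
          simpa using this
        refine this.congr fun X => ?_
        simp only [hg]; ring
      rw [cocompact_eq_atBot_atTop] at hc
      exact hc.mono_left le_sup_left
    have hgtop : Tendsto g atTop (nhds 0) := by
      have hc : Tendsto g (cocompact ℝ) (nhds 0) := by
        have e1 := hbd1 τ hτ
        have e2 := hbd2 τ hτ
        have : Tendsto (fun X : ℝ =>
            -(𝒪 X 0 τ * ρx X (t - τ) - ρ X (t - τ) * 𝒪x X 0 τ)
              - deriv S X * 𝒪 X 0 τ * ρ X (t - τ)) (cocompact ℝ) (nhds 0) := by
          have := (e1.neg).sub e2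
          simpa using this
        refine this.congr fun X => ?_
        simp only [hg]; ring
      rw [cocompact_eq_atBot_atTop] at hc
      exact hc.mono_left le_sup_right
    have := MeasureTheory.integral_of_hasDerivAt_of_tendsto hgderiv (hint2 τ hτ) hgbot hgtop
    rw [this]; simp
  -- F is constant on [0, t]
  set F : ℝ → ℂ := fun u => ∫ x : ℝ, ρ x (t - u) * 𝒪 x 0 u with hFdef
  have hFconst : F t = F 0 := by
    have hcont : ContinuousOn F (Set.Icc 0 t) := by
      intro τ hτ
      exact ((hF τ hτ).continuousAt).continuousWithinAt
    have hder : ∀ τ ∈ Set.Ico (0:ℝ) t, HasDerivWithinAt F 0 (Set.Ici τ) τ := by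
      intro τ hτ
      have hτ' : τ ∈ Set.Icc (0:ℝ) t := ⟨hτ.1, le_of_lt hτ.2⟩
      have := hF τ hτ'
      rw [hzero τ hτ'] at this
      exact this.hasDerivWithinAt
    have := constant_of_has_deriv_right_zero hcont hder t (Set.right_mem_Icc.mpr (le_of_lt ht))
    exact this
  -- identify F 0 and F t
  have hF0 : F 0 = ∫ x : ℝ, ρ x t * O x := by
    simp only [hFdef, sub_zero]
    congr 1
    funext x
    rw [h𝒪init x 0]
    norm_num
  have hFt : F t = ∫ q : ℝ × ℝ, O (q.1 + q.2 * I) * (P q.1 q.2 t : ℂ) := by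
    have h1 : F t = ∫ x : ℝ, 𝒪 x 0 t * (p x : ℂ) := by
      simp only [hFdef, sub_self]
      congr 1
      funext x
      rw [hρinit x]
      ring
    have h2 := hH1 t (Set.right_mem_Icc.mpr (le_of_lt ht))
    rw [sub_self] at h2
    rw [h1, ← hPinit, h2]
  have hfinal : ∫ x : ℝ, ρ x t * O x = ∫ q : ℝ × ℝ, O (q.1 + q.2 * I) * (P q.1 q.2 t : ℂ) := by
    rw [← hF0, ← hFt, hFconst]
  rw [hfinal]
  congr 1
  funext q
  ring
end

section
/- Let S : ℂ → ℂ be entire, K(x,y) = Re(−S′(x+iy)), Jv(x,y) = Im(−S′(x+iy)), and fix t > 0. Suppose 𝒪 : ℝ×ℝ×[0,t] → ℂ is continuously differentiable in time and twice continuously differentiable in space, solves ∂_τ𝒪 = ∂ₓₓ𝒪 + K·∂ₓ𝒪 + Jv·∂_y𝒪, and satisfies the Cauchy–Riemann relation ∂_y𝒪 = i·∂ₓ𝒪 everywhere; suppose ρ : ℝ×[0,t] → ℂ is continuously differentiable in time and twice continuously differentiable in space and solves ∂_sρ = ∂ₓ(S′(x)·ρ) + ∂ₓₓρ. Assume that for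 every τ ∈ [0,t]: 𝒪(X,0,τ)·∂ₓρ(X,t−τ) − ρ(X,t−τ)·∂ₓ𝒪(X,0,τ) → 0 and S′(X)·𝒪(X,0,τ)·ρ(X,t−τ) → 0 as |X| → ∞; that x ↦ ρ(x,t−τ)·𝒪(x,0,τ) and all integrands produced by integration by parts are absolutely integrable; and that differentiation under the integral sign in τ is valid. Then the function F(τ) = ∫_ℝ ρ(x,t−τ)·𝒪(x,0,τ) dx is constant on [0,t]. -/
open MeasureTheory Filter Complex

/-- The interpolation quantity `F(τ) = ∫ ρ(x, t−τ)·𝒪(x, 0, τ) dx` is constant on `[0, t]`,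
given the backward Kolmogorov equation for `𝒪` with the Cauchy–Riemann structure, the
complex Fokker–Planck equation for `ρ`, vanishing boundary terms, integrability, and
validity of differentiation under the integral sign. -/
theorem stmt4
    (S : ℂ → ℂ) (hS : Differentiable ℂ S)
    (K Jv : ℝ → ℝ → ℝ)
    (hK : ∀ x y : ℝ, K x y = (-(deriv S (x + y * I))).re)
    (hJv : ∀ x y : ℝ, Jv x y = (-(deriv S (x + y * I))).im)
    (t : ℝ) (ht : 0 < t)
    -- backward Kolmogorov solution 𝒪 with its partial derivatives
    (𝒪 𝒪x 𝒪y 𝒪xx 𝒪t : ℝ → ℝ → ℝ → ℂ)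
    (h𝒪x : ∀ x y τ : ℝ, HasDerivAt (fun u => 𝒪 u y τ) (𝒪x x y τ) x)
    (h𝒪y : ∀ x y τ : ℝ, HasDerivAt (fun u => 𝒪 x u τ) (𝒪y x y τ) y)
    (h𝒪xx : ∀ x y τ : ℝ, HasDerivAt (fun u => 𝒪x u y τ) (𝒪xx x y τ) x)
    (h𝒪xC : ∀ τ ∈ Set.Icc (0 : ℝ) t, Continuous fun q : ℝ × ℝ => 𝒪x q.1 q.2 τ)
    (h𝒪xxC : ∀ τ ∈ Set.Icc (0 : ℝ) t, Continuous fun q : ℝ × ℝ => 𝒪xx q.1 q.2 τ)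
    (h𝒪t : ∀ x y : ℝ, ∀ τ ∈ Set.Icc (0 : ℝ) t, HasDerivAt (fun u => 𝒪 x y u) (𝒪t x y τ) τ)
    (h𝒪tC : ∀ x y : ℝ, ContinuousOn (fun u => 𝒪t x y u) (Set.Icc (0 : ℝ) t))
    (hBKE : ∀ x y : ℝ, ∀ τ ∈ Set.Icc (0 : ℝ) t,
      𝒪t x y τ = 𝒪xx x y τ + (K x y : ℂ) * 𝒪x x y τ + (Jv x y : ℂ) * 𝒪y x y τ)
    (hCR : ∀ x y τ : ℝ, 𝒪y x y τ = I * 𝒪x x y τ)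
    -- complex Fokker–Planck solution ρ with its partial derivatives
    (ρ ρx ρxx ρs : ℝ → ℝ → ℂ)
    (hρx : ∀ x s : ℝ, HasDerivAt (fun u => ρ u s) (ρx x s) x)
    (hρxx : ∀ x s : ℝ, HasDerivAt (fun u => ρx u s) (ρxx x s) x)
    (hρxC : ∀ s ∈ Set.Icc (0 : ℝ) t, Continuous fun x => ρx x s)
    (hρxxC : ∀ s ∈ Set.Icc (0 : ℝ) t, Continuous fun x => ρxx x s)
    (hρs : ∀ x : ℝ, ∀ s ∈ Set.Icc (0 : ℝ) t, HasDerivAt (fun u => ρ x u) (ρs x s) s)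
    (hρsC : ∀ x : ℝ, ContinuousOn (fun u => ρs x u) (Set.Icc (0 : ℝ) t))
    (hFPE : ∀ x : ℝ, ∀ s ∈ Set.Icc (0 : ℝ) t,
      ρs x s = deriv (deriv S) x * ρ x s + deriv S x * ρx x s + ρxx x s)
    -- vanishing boundary terms as |X| → ∞
    (hbd1 : ∀ τ ∈ Set.Icc (0 : ℝ) t,
      Tendsto (fun X : ℝ => 𝒪 X 0 τ * ρx X (t - τ) - ρ X (t - τ) * 𝒪x X 0 τ)
        (cocompact ℝ) (nhds 0))
    (hbd2 : ∀ τ ∈ Set.Icc (0 : ℝ) t,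
      Tendsto (fun X : ℝ => deriv S X * 𝒪 X 0 τ * ρ X (t - τ)) (cocompact ℝ) (nhds 0))
    -- absolute integrability of the integrands occurring in the integration by parts
    (hint1 : ∀ τ ∈ Set.Icc (0 : ℝ) t, Integrable (fun x : ℝ => ρ x (t - τ) * 𝒪 x 0 τ))
    (hint2 : ∀ τ ∈ Set.Icc (0 : ℝ) t,
      Integrable (fun x : ℝ => ρ x (t - τ) * 𝒪t x 0 τ - ρs x (t - τ) * 𝒪 x 0 τ))
    (hint3 : ∀ τ ∈ Set.Icc (0 : ℝ) t,
      Integrable (fun x : ℝ => ρ x (t - τ) * 𝒪xx x 0 τ))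
    (hint4 : ∀ τ ∈ Set.Icc (0 : ℝ) t,
      Integrable (fun x : ℝ => ρ x (t - τ) * deriv S x * 𝒪x x 0 τ))
    (hint5 : ∀ τ ∈ Set.Icc (0 : ℝ) t,
      Integrable (fun x : ℝ => 𝒪 x 0 τ * ρxx x (t - τ)))
    (hint6 : ∀ τ ∈ Set.Icc (0 : ℝ) t,
      Integrable (fun x : ℝ => 𝒪 x 0 τ * (deriv (deriv S) x * ρ x (t - τ) + deriv S x * ρx x (t - τ))))
    -- differentiation under the integral sign for F
    (hF : ∀ τ ∈ Set.Icc (0 : ℝ) t,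
      HasDerivAt (fun u : ℝ => ∫ x : ℝ, ρ x (t - u) * 𝒪 x 0 u)
        (∫ x : ℝ, (ρ x (t - τ) * 𝒪t x 0 τ - ρs x (t - τ) * 𝒪 x 0 τ)) τ) :
    ∀ τ₁ ∈ Set.Icc (0 : ℝ) t, ∀ τ₂ ∈ Set.Icc (0 : ℝ) t,
      (∫ x : ℝ, ρ x (t - τ₁) * 𝒪 x 0 τ₁) = ∫ x : ℝ, ρ x (t - τ₂) * 𝒪 x 0 τ₂ := by
  -- S' := deriv S is entire, hence differentiable with derivative deriv (deriv S)
  have hS' : Differentiable ℂ (deriv S) := by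
    have := (hS.differentiableOn (s := Set.univ)).analyticOnNhd isOpen_univ
    have h2 := this.deriv
    exact fun z => (h2 z (Set.mem_univ z)).differentiableAt
  have hS'r : ∀ x : ℝ, HasDerivAt (fun u : ℝ => deriv S (u : ℂ))
      (deriv (deriv S) (x : ℝ)) x := fun x =>
    ((hS' (x : ℂ)).hasDerivAt).comp_ofReal
  -- the key: derivative of F is zero on [0,t]
  have key : ∀ τ ∈ Set.Icc (0 : ℝ) t,
      (∫ x : ℝ, (ρ x (t - τ) * 𝒪t x 0 τ - ρs x (t - τ) * 𝒪 x 0 τ)) = 0 := by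
    intro τ hτ
    have hτ' : t - τ ∈ Set.Icc (0 : ℝ) t :=
      ⟨by linarith [hτ.2], by linarith [hτ.1]⟩
    set s := t - τ with hs
    -- the boundary function
    set B : ℝ → ℂ := fun x =>
      (𝒪 x 0 τ * ρx x s - ρ x s * 𝒪x x 0 τ) + deriv S (x : ℂ) * 𝒪 x 0 τ * ρ x s
      with hB
    -- the integrand
    set g : ℝ → ℂ := fun x => ρ x s * 𝒪t x 0 τ - ρs x s * 𝒪 x 0 τ with hg
    -- pointwise identity for g
    have hgx : ∀ x : ℝ, g x =
        ρ x s * 𝒪xx x 0 τ - ρ x s * deriv S (x : ℂ) * 𝒪x x 0 τ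
        - (deriv (deriv S) (x : ℝ) * ρ x s + deriv S (x : ℝ) * ρx x s + ρxx x s)
          * 𝒪 x 0 τ := by
      intro x
      have hKJ : ((K x 0 : ℂ) + (Jv x 0 : ℂ) * I) = -deriv S (x : ℂ) := by
        rw [hK, hJv]
        push_cast
        rw [zero_mul, add_zero]
        exact Complex.re_add_im _
      have hOt := hBKE x 0 τ hτ
      rw [hCR] at hOt
      have hρs' := hFPE x s hτ'
      simp only [hg]
      rw [hOt, hρs']
      linear_combination (ρ x s * 𝒪x x 0 τ) * hKJ
    -- B has derivative -g
    have hBderiv : ∀ x : ℝ, HasDerivAt B (-g x) x := by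
      intro x
      have h1 : HasDerivAt (fun u : ℝ => 𝒪 u 0 τ * ρx u s)
          (𝒪x x 0 τ * ρx x s + 𝒪 x 0 τ * ρxx x s) x :=
        (h𝒪x x 0 τ).mul (hρxx x s)
      have h2 : HasDerivAt (fun u : ℝ => ρ u s * 𝒪x u 0 τ)
          (ρx x s * 𝒪x x 0 τ + ρ x s * 𝒪xx x 0 τ) x :=
        (hρx x s).mul (h𝒪xx x 0 τ)
      have h3 : HasDerivAt (fun u : ℝ => deriv S (u : ℂ) * 𝒪 u 0 τ * ρ u s)
          ((deriv (deriv S) (x : ℝ) * 𝒪 x 0 τ + deriv S (x : ℂ) * 𝒪x x 0 τ) * ρ x s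
            + deriv S (x : ℂ) * 𝒪 x 0 τ * ρx x s) x :=
        ((hS'r x).mul (h𝒪x x 0 τ)).mul (hρx x s)
      have := ((h1.sub h2).add h3)
      refine this.congr_deriv ?_
      rw [hgx x]
      ring
    -- g is integrable
    have hgint : Integrable g := hint2 τ hτ
    -- B tends to 0 at ±∞
    have hBtend : Tendsto B (cocompact ℝ) (nhds 0) := by
      have := (hbd1 τ hτ).add (hbd2 τ hτ)
      simpa [hB, add_zero] using this
    rw [cocompact_eq_atBot_atTop] at hBtend
    have hbot : Tendsto B atBot (nhds 0) :=
      hBtend.mono_left le_sup_left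
    have htop : Tendsto B atTop (nhds 0) :=
      hBtend.mono_left le_sup_right
    have := MeasureTheory.integral_of_hasDerivAt_of_tendsto hBderiv hgint.neg hbot htop
    simp only [sub_zero] at this
    have h0 : (∫ x : ℝ, -g x) = 0 := this
    rw [integral_neg] at h0
    have := neg_eq_zero.mp h0
    simpa [hg] using this
  -- now F is constant on [0,t]
  set F : ℝ → ℂ := fun u => ∫ x : ℝ, ρ x (t - u) * 𝒪 x 0 u with hFdef
  have hFd : ∀ τ ∈ Set.Icc (0 : ℝ) t, HasDerivAt F 0 τ := by
    intro τ hτ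
    have := hF τ hτ
    rwa [key τ hτ] at this
  have hFcont : ContinuousOn F (Set.Icc 0 t) := fun τ hτ =>
    ((hFd τ hτ).continuousAt).continuousWithinAt
  have hconst : ∀ τ ∈ Set.Icc (0 : ℝ) t, F τ = F 0 := by
    apply constant_of_has_deriv_right_zero hFcont
    intro τ hτ
    exact ((hFd τ (Set.mem_Icc_of_Ico hτ)).hasDerivWithinAt)
  intro τ₁ hτ₁ τ₂ hτ₂
  calc F τ₁ = F 0 := hconst τ₁ hτ₁
    _ = F τ₂ := (hconst τ₂ hτ₂).symm
end

section
/- Let A, B ∈ ℝ with (A,B) ≠ (0,0), let β ∈ ℝ, and let c : ℝ → ℝ be a differentiable function with c(x) > 0 for all x ∈ ℝ, satisfying c′(x)·(B·cos x − A·sin x) + (β − 2)·c(x)·(A·cos x + B·sin x) = 0 for all x ∈ ℝ. Then β = 2. -/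
/-- If a positive differentiable angular profile `c` satisfies
`c′(x)(B cos x − A sin x) + (β−2) c(x)(A cos x + B sin x) = 0` for all `x`, with
`(A,B) ≠ (0,0)`, then the decay exponent `β` must equal `2`. -/
theorem stmt5 (A B β : ℝ) (hAB : (A, B) ≠ ((0 : ℝ), (0 : ℝ)))
    (c : ℝ → ℝ) (hc : Differentiable ℝ c) (hcpos : ∀ x : ℝ, 0 < c x)
    (hode : ∀ x : ℝ,
      deriv c x * (B * Real.cos x - A * Real.sin x)
        + (β - 2) * c x * (A * Real.cos x + B * Real.sin x) = 0) :
    β = 2 := by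
  -- Find x₀ with B cos x₀ − A sin x₀ = 0 and A cos x₀ + B sin x₀ ≠ 0.
  obtain ⟨x₀, h1, h2⟩ : ∃ x₀, B * Real.cos x₀ - A * Real.sin x₀ = 0 ∧
      A * Real.cos x₀ + B * Real.sin x₀ ≠ 0 := by
    by_cases hA : A = 0
    · have hB : B ≠ 0 := by
        intro hB; exact hAB (by simp [hA, hB])
      exact ⟨Real.pi / 2, by simp [hA], by simpa [hA] using hB⟩
    · refine ⟨Real.arctan (B / A), ?_, ?_⟩
      · have htan := Real.tan_arctan (B / A)
        rw [Real.tan_eq_sin_div_cos] at htan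
        have hcos := (Real.cos_arctan_pos (B / A)).ne'
        field_simp at htan
        linarith [htan]
      · have htan := Real.tan_arctan (B / A)
        rw [Real.tan_eq_sin_div_cos] at htan
        have hcos := Real.cos_arctan_pos (B / A)
        field_simp at htan
        intro h
        have hAB2 : A ^ 2 + B ^ 2 > 0 := by positivity
        have hx : (A ^ 2 + B ^ 2) * Real.cos (Real.arctan (B / A)) = 0 := by
          linear_combination A * h - B * htan
        exact (mul_pos hAB2 hcos).ne' hx
  have := hode x₀
  rw [h1] at this
  have hc0 := (hcpos x₀).ne'
  have : (β - 2) * (c x₀ * (A * Real.cos x₀ + B * Real.sin x₀)) = 0 := by linarith [this]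
  rcases mul_eq_zero.mp this with h | h
  · linarith
  · exact absurd (mul_eq_zero.mp h) (by push_neg; exact ⟨hc0, h2⟩)
end

section
/- For every B ∈ ℝ and every real y > 0, the improper integral ∫_ℝ (y + B·x + 3x²y − y³)·(x² − y² + 2ixy)/(x² + y²)³ dx converges and equals π·(iB + 4y² − 1)/(4y²). -/
open MeasureTheory Complex Filter Topology

set_option maxHeartbeats 1000000 in
/-- Auxiliary: fundamental theorem of calculus on ℝ for antiderivatives of the
form `lam * arctan (x/y) + (cubic)/(x²+y²)²`. -/
lemma aux_integral (y p3 p2 p1 p0 lam : ℝ) (hy : 0 < y) (f : ℝ → ℝ)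
    (hf : Integrable f)
    (hderiv : ∀ x : ℝ, HasDerivAt
      (fun x : ℝ => lam * Real.arctan (x / y)
        + (p3 * x ^ 3 + p2 * x ^ 2 + p1 * x + p0) / (x ^ 2 + y ^ 2) ^ 2) (f x) x) :
    ∫ x : ℝ, f x = lam * Real.pi := by
  have hGcont : ContinuousAt (fun t : ℝ =>
      (p3 * t + p2 * t ^ 2 + p1 * t ^ 3 + p0 * t ^ 4) / (1 + y ^ 2 * t ^ 2) ^ 2) 0 := by
    apply ContinuousAt.div
    · fun_prop
    · fun_prop
    · norm_num
  have hG0 : (p3 * (0:ℝ) + p2 * (0:ℝ) ^ 2 + p1 * (0:ℝ) ^ 3 + p0 * (0:ℝ) ^ 4)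
      / (1 + y ^ 2 * (0:ℝ) ^ 2) ^ 2 = 0 := by norm_num
  have hGeq : ∀ x : ℝ, x ≠ 0 →
      (p3 * x⁻¹ + p2 * (x⁻¹) ^ 2 + p1 * (x⁻¹) ^ 3 + p0 * (x⁻¹) ^ 4)
        / (1 + y ^ 2 * (x⁻¹) ^ 2) ^ 2
      = (p3 * x ^ 3 + p2 * x ^ 2 + p1 * x + p0) / (x ^ 2 + y ^ 2) ^ 2 := by
    intro x hx
    have hden : x ^ 2 + y ^ 2 ≠ 0 := by positivity
    rw [div_eq_div_iff (by positivity) (by positivity)]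
    field_simp
  have hratTop : Tendsto (fun x : ℝ =>
      (p3 * x ^ 3 + p2 * x ^ 2 + p1 * x + p0) / (x ^ 2 + y ^ 2) ^ 2) atTop (𝓝 0) := by
    have h1 := hGcont.tendsto.comp tendsto_inv_atTop_zero
    rw [hG0] at h1
    refine h1.congr' ?_
    filter_upwards [eventually_gt_atTop (0 : ℝ)] with x hx
    exact hGeq x hx.ne'
  have hratBot : Tendsto (fun x : ℝ =>
      (p3 * x ^ 3 + p2 * x ^ 2 + p1 * x + p0) / (x ^ 2 + y ^ 2) ^ 2) atBot (𝓝 0) := by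
    have hinv : Tendsto (fun x : ℝ => x⁻¹) atBot (𝓝 0) := by
      have h : Tendsto (fun x : ℝ => -(-x)⁻¹) atBot (𝓝 (-0)) :=
        (tendsto_inv_atTop_zero.comp tendsto_neg_atBot_atTop).neg
      rw [neg_zero] at h
      refine h.congr fun x => ?_
      rw [_root_.inv_neg, neg_neg]
    have h1 := hGcont.tendsto.comp hinv
    rw [hG0] at h1
    refine h1.congr' ?_
    filter_upwards [eventually_lt_atBot (0 : ℝ)] with x hx
    exact hGeq x hx.ne
  have hatanTop : Tendsto (fun x : ℝ => lam * Real.arctan (x / y)) atTop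
      (𝓝 (lam * (Real.pi / 2))) := by
    refine Tendsto.const_mul lam ?_
    exact (Real.tendsto_arctan_atTop.mono_right nhdsWithin_le_nhds).comp
      (tendsto_id.atTop_div_const hy)
  have hatanBot : Tendsto (fun x : ℝ => lam * Real.arctan (x / y)) atBot
      (𝓝 (lam * (-(Real.pi / 2)))) := by
    refine Tendsto.const_mul lam ?_
    exact (Real.tendsto_arctan_atBot.mono_right nhdsWithin_le_nhds).comp
      (tendsto_id.atBot_div_const hy)
  have htop : Tendsto (fun x : ℝ => lam * Real.arctan (x / y)
      + (p3 * x ^ 3 + p2 * x ^ 2 + p1 * x + p0) / (x ^ 2 + y ^ 2) ^ 2) atTop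
      (𝓝 (lam * (Real.pi / 2))) := by
    have h := hatanTop.add hratTop
    simpa using h
  have hbot : Tendsto (fun x : ℝ => lam * Real.arctan (x / y)
      + (p3 * x ^ 3 + p2 * x ^ 2 + p1 * x + p0) / (x ^ 2 + y ^ 2) ^ 2) atBot
      (𝓝 (lam * (-(Real.pi / 2)))) := by
    have h := hatanBot.add hratBot
    simpa using h
  rw [MeasureTheory.integral_of_hasDerivAt_of_tendsto hderiv hf hbot htop]
  ring

set_option maxHeartbeats 1000000 in
/-- The boundary-term integral for the quartic model with fat-tailed density:
for every `B ∈ ℝ` and `y > 0`, the integral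
`∫_ℝ (y + Bx + 3x²y − y³)(x² − y² + 2ixy)/(x² + y²)³ dx`
converges absolutely and equals `π(iB + 4y² − 1)/(4y²)`. -/
theorem stmt6 (B y : ℝ) (hy : 0 < y) :
    Integrable (fun x : ℝ =>
      ((y + B * x + 3 * x ^ 2 * y - y ^ 3 : ℝ) : ℂ)
        * ((x ^ 2 - y ^ 2 : ℝ) + 2 * (x : ℂ) * (y : ℂ) * I)
        / (((x ^ 2 + y ^ 2 : ℝ) : ℂ)) ^ 3) ∧
    (∫ x : ℝ,
      ((y + B * x + 3 * x ^ 2 * y - y ^ 3 : ℝ) : ℂ)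
        * ((x ^ 2 - y ^ 2 : ℝ) + 2 * (x : ℂ) * (y : ℂ) * I)
        / (((x ^ 2 + y ^ 2 : ℝ) : ℂ)) ^ 3)
      = (Real.pi : ℂ) * (I * (B : ℂ) + 4 * (y : ℂ) ^ 2 - 1) / (4 * (y : ℂ) ^ 2) := by
  have hy0 : y ≠ 0 := hy.ne'
  have hpos : ∀ x : ℝ, 0 < x ^ 2 + y ^ 2 := fun x => by positivity
  have hC : ∀ x : ℝ, ((x : ℂ) ^ 2 + (y : ℂ) ^ 2) ≠ 0 := by
    intro x
    have h : ((x ^ 2 + y ^ 2 : ℝ) : ℂ) ≠ 0 := ofReal_ne_zero.mpr (hpos x).ne'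
    push_cast at h
    exact h
  have feq : ∀ x : ℝ,
      ((y + B * x + 3 * x ^ 2 * y - y ^ 3 : ℝ) : ℂ)
        * ((x ^ 2 - y ^ 2 : ℝ) + 2 * (x : ℂ) * (y : ℂ) * I)
        / (((x ^ 2 + y ^ 2 : ℝ) : ℂ)) ^ 3
      = (((y + B * x + 3 * x ^ 2 * y - y ^ 3) * (x ^ 2 - y ^ 2)
            / (x ^ 2 + y ^ 2) ^ 3 : ℝ) : ℂ)
        + (((y + B * x + 3 * x ^ 2 * y - y ^ 3) * (2 * x * y)
            / (x ^ 2 + y ^ 2) ^ 3 : ℝ) : ℂ) * I := by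
    intro x
    have h := hC x
    push_cast
    field_simp
  -- Integrability
  have hf : Integrable (fun x : ℝ =>
      ((y + B * x + 3 * x ^ 2 * y - y ^ 3 : ℝ) : ℂ)
        * ((x ^ 2 - y ^ 2 : ℝ) + 2 * (x : ℂ) * (y : ℂ) * I)
        / (((x ^ 2 + y ^ 2 : ℝ) : ℂ)) ^ 3) := by
    have hfcont : Continuous (fun x : ℝ =>
        ((y + B * x + 3 * x ^ 2 * y - y ^ 3 : ℝ) : ℂ)
          * ((x ^ 2 - y ^ 2 : ℝ) + 2 * (x : ℂ) * (y : ℂ) * I)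
          / (((x ^ 2 + y ^ 2 : ℝ) : ℂ)) ^ 3) := by
      apply Continuous.div
      · fun_prop
      · fun_prop
      · intro x
        exact pow_ne_zero _ (ofReal_ne_zero.mpr (hpos x).ne')
    have hgint : Integrable (fun x : ℝ =>
        ((4 * y + y ^ 3 + |B|) * (1 + (1 / y) ^ 2)) * (x ^ 2 + y ^ 2)⁻¹) := by
      have h1 : Integrable (fun x : ℝ => (1 + x ^ 2)⁻¹) := integrable_inv_one_add_sq
      have h2 : Integrable (fun x : ℝ => (1 + (x / y) ^ 2)⁻¹) := h1.comp_div hy0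
      have h3 := (h2.const_mul ((1 / y) ^ 2)).const_mul
        ((4 * y + y ^ 3 + |B|) * (1 + (1 / y) ^ 2))
      refine h3.congr (Eventually.of_forall fun x => ?_)
      have hxx : x ^ 2 + y ^ 2 ≠ 0 := (hpos x).ne'
      have key : (1 / y) ^ 2 * (1 + (x / y) ^ 2)⁻¹ = (x ^ 2 + y ^ 2)⁻¹ := by
        field_simp
        ring
      show (4 * y + y ^ 3 + |B|) * (1 + (1 / y) ^ 2) * ((1 / y) ^ 2 * (1 + (x / y) ^ 2)⁻¹)
          = (4 * y + y ^ 3 + |B|) * (1 + (1 / y) ^ 2) * (x ^ 2 + y ^ 2)⁻¹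
      rw [key]
    refine hgint.mono' hfcont.aestronglyMeasurable (Eventually.of_forall fun x => ?_)
    have hnum1 : |y + B * x + 3 * x ^ 2 * y - y ^ 3| ≤ (4 * y + y ^ 3 + |B|) * (1 + x ^ 2) := by
      have hBx : |B * x| ≤ |B| * (1 + x ^ 2) := by
        rw [abs_mul]
        refine mul_le_mul_of_nonneg_left ?_ (abs_nonneg B)
        nlinarith [_root_.sq_abs x, sq_nonneg (|x| - 1), abs_nonneg x]
      have h1 := le_abs_self (B * x)
      have h2 := neg_abs_le (B * x)
      rw [abs_le]
      constructor <;> nlinarith [sq_nonneg x, mul_pos hy (mul_pos hy hy),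
        mul_nonneg (mul_nonneg hy.le hy.le) (sq_nonneg x),
        mul_nonneg hy.le (sq_nonneg x), abs_nonneg B,
        mul_nonneg (abs_nonneg B) (sq_nonneg x)]
    have hnum2 : ‖((x ^ 2 - y ^ 2 : ℝ) : ℂ) + 2 * (x : ℂ) * (y : ℂ) * I‖
        = x ^ 2 + y ^ 2 := by
      have hz : ((x ^ 2 - y ^ 2 : ℝ) : ℂ) + 2 * (x : ℂ) * (y : ℂ) * I
          = ((x ^ 2 - y ^ 2 : ℝ) : ℂ) + ((2 * x * y : ℝ) : ℂ) * I := by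
        push_cast; ring
      rw [hz, Complex.norm_add_mul_I]
      have hq : (x ^ 2 - y ^ 2) ^ 2 + (2 * x * y) ^ 2 = (x ^ 2 + y ^ 2) ^ 2 := by ring
      rw [hq, Real.sqrt_sq (hpos x).le]
    have hnorm : ‖((y + B * x + 3 * x ^ 2 * y - y ^ 3 : ℝ) : ℂ)
        * ((x ^ 2 - y ^ 2 : ℝ) + 2 * (x : ℂ) * (y : ℂ) * I)
        / (((x ^ 2 + y ^ 2 : ℝ) : ℂ)) ^ 3‖
        = |y + B * x + 3 * x ^ 2 * y - y ^ 3| * (x ^ 2 + y ^ 2) / (x ^ 2 + y ^ 2) ^ 3 := by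
      rw [norm_div, norm_mul, norm_pow, hnum2, Complex.norm_real, Complex.norm_real,
        Real.norm_eq_abs, Real.norm_eq_abs, abs_of_pos (hpos x)]
    rw [hnorm]
    have h3 : (1 : ℝ) + x ^ 2 ≤ (1 + (1 / y) ^ 2) * (x ^ 2 + y ^ 2) := by
      have h4 : (1 + (1 / y) ^ 2) * (x ^ 2 + y ^ 2) = x ^ 2 + y ^ 2 + (x / y) ^ 2 + 1 := by
        field_simp; ring
      nlinarith [sq_nonneg (x / y), sq_nonneg x, hy]
    have hA0 : (0 : ℝ) ≤ 4 * y + y ^ 3 + |B| := by positivity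
    have hKgoal : ((4 * y + y ^ 3 + |B|) * (1 + (1 / y) ^ 2)) * (x ^ 2 + y ^ 2)⁻¹
        = ((4 * y + y ^ 3 + |B|) * (1 + (1 / y) ^ 2)) * (x ^ 2 + y ^ 2) ^ 2
          / (x ^ 2 + y ^ 2) ^ 3 := by
      have hxx : x ^ 2 + y ^ 2 ≠ 0 := (hpos x).ne'
      field_simp
    rw [hKgoal, div_le_div_iff_of_pos_right (by positivity)]
    calc |y + B * x + 3 * x ^ 2 * y - y ^ 3| * (x ^ 2 + y ^ 2)
        ≤ ((4 * y + y ^ 3 + |B|) * (1 + x ^ 2)) * (x ^ 2 + y ^ 2) := by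
          exact mul_le_mul_of_nonneg_right hnum1 (hpos x).le
      _ ≤ ((4 * y + y ^ 3 + |B|) * ((1 + (1 / y) ^ 2) * (x ^ 2 + y ^ 2))) * (x ^ 2 + y ^ 2) := by
          gcongr
      _ = ((4 * y + y ^ 3 + |B|) * (1 + (1 / y) ^ 2)) * (x ^ 2 + y ^ 2) ^ 2 := by ring
  have hu : Integrable (fun x : ℝ =>
      (y + B * x + 3 * x ^ 2 * y - y ^ 3) * (x ^ 2 - y ^ 2) / (x ^ 2 + y ^ 2) ^ 3) := by
    refine hf.re.congr (Eventually.of_forall fun x => ?_)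
    simp only [RCLike.re_to_complex]
    rw [feq x]
    simp only [Complex.add_re, Complex.ofReal_re, Complex.mul_I_re, Complex.ofReal_im,
      neg_zero, add_zero]
  have hv : Integrable (fun x : ℝ =>
      (y + B * x + 3 * x ^ 2 * y - y ^ 3) * (2 * x * y) / (x ^ 2 + y ^ 2) ^ 3) := by
    refine hf.im.congr (Eventually.of_forall fun x => ?_)
    simp only [RCLike.im_to_complex]
    rw [feq x]
    simp only [Complex.add_im, Complex.ofReal_im, Complex.mul_I_im, Complex.ofReal_re,
      zero_add]
  refine ⟨hf, ?_⟩
  have hUint : ∫ x : ℝ, (y + B * x + 3 * x ^ 2 * y - y ^ 3) * (x ^ 2 - y ^ 2)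
      / (x ^ 2 + y ^ 2) ^ 3 = (4 * y ^ 2 - 1) / (4 * y ^ 2) * Real.pi := by
    refine aux_integral y (-((8 * y ^ 2 + 1) / (4 * y))) (-(B / 2)) (-(3 * y / 4)) 0
        ((4 * y ^ 2 - 1) / (4 * y ^ 2)) hy _ hu ?_
    intro x
    have hx0 : x ^ 2 + y ^ 2 ≠ 0 := (hpos x).ne'
    have h1 : HasDerivAt (fun x : ℝ => Real.arctan (x / y))
        (1 / (1 + (x / y) ^ 2) * (1 / y)) x := by
      simpa using ((hasDerivAt_id x).div_const y).arctan
    have h2 := h1.const_mul ((4 * y ^ 2 - 1) / (4 * y ^ 2))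
    have h3 : HasDerivAt (fun x : ℝ =>
        -((8 * y ^ 2 + 1) / (4 * y)) * x ^ 3 + -(B / 2) * x ^ 2 + -(3 * y / 4) * x + 0)
        (-((8 * y ^ 2 + 1) / (4 * y)) * (3 * x ^ 2) + -(B / 2) * (2 * x) + -(3 * y / 4)) x := by
      have h := ((((hasDerivAt_pow 3 x).const_mul (-((8 * y ^ 2 + 1) / (4 * y)))).add
        ((hasDerivAt_pow 2 x).const_mul (-(B / 2)))).add
        ((hasDerivAt_id x).const_mul (-(3 * y / 4)))).add_const 0
      convert h using 1
      all_goals try rfl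
      all_goals (push_cast; ring)
    have h4 : HasDerivAt (fun x : ℝ => (x ^ 2 + y ^ 2) ^ 2)
        (2 * (x ^ 2 + y ^ 2) * (2 * x)) x := by
      have h := (((hasDerivAt_pow 2 x).add_const (y ^ 2)).pow 2)
      convert h using 1
      all_goals try rfl
      all_goals (push_cast; ring)
    have h5 := h3.div h4 (pow_ne_zero 2 hx0)
    have hF := h2.add h5
    convert hF using 1
    all_goals try rfl
    have h1y : (1 : ℝ) + (x / y) ^ 2 ≠ 0 := by positivity
    field_simp
    ring
  have hVint : ∫ x : ℝ, (y + B * x + 3 * x ^ 2 * y - y ^ 3) * (2 * x * y)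
      / (x ^ 2 + y ^ 2) ^ 3 = B / (4 * y ^ 2) * Real.pi := by
    refine aux_integral y (B / (4 * y)) (-(3 * y ^ 2)) (-(B * y / 4))
        (-(y ^ 2 * (2 * y ^ 2 + 1) / 2)) (B / (4 * y ^ 2)) hy _ hv ?_
    intro x
    have hx0 : x ^ 2 + y ^ 2 ≠ 0 := (hpos x).ne'
    have h1 : HasDerivAt (fun x : ℝ => Real.arctan (x / y))
        (1 / (1 + (x / y) ^ 2) * (1 / y)) x := by
      simpa using ((hasDerivAt_id x).div_const y).arctan
    have h2 := h1.const_mul (B / (4 * y ^ 2))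
    have h3 : HasDerivAt (fun x : ℝ =>
        B / (4 * y) * x ^ 3 + -(3 * y ^ 2) * x ^ 2 + -(B * y / 4) * x
          + -(y ^ 2 * (2 * y ^ 2 + 1) / 2))
        (B / (4 * y) * (3 * x ^ 2) + -(3 * y ^ 2) * (2 * x) + -(B * y / 4)) x := by
      have h := ((((hasDerivAt_pow 3 x).const_mul (B / (4 * y))).add
        ((hasDerivAt_pow 2 x).const_mul (-(3 * y ^ 2)))).add
        ((hasDerivAt_id x).const_mul (-(B * y / 4)))).add_const
          (-(y ^ 2 * (2 * y ^ 2 + 1) / 2))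
      convert h using 1
      all_goals try rfl
      all_goals (push_cast; ring)
    have h4 : HasDerivAt (fun x : ℝ => (x ^ 2 + y ^ 2) ^ 2)
        (2 * (x ^ 2 + y ^ 2) * (2 * x)) x := by
      have h := (((hasDerivAt_pow 2 x).add_const (y ^ 2)).pow 2)
      convert h using 1
      all_goals try rfl
      all_goals (push_cast; ring)
    have h5 := h3.div h4 (pow_ne_zero 2 hx0)
    have hF := h2.add h5
    convert hF using 1
    all_goals try rfl
    have h1y : (1 : ℝ) + (x / y) ^ 2 ≠ 0 := by positivity
    field_simp
    ring
  calc (∫ x : ℝ,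
      ((y + B * x + 3 * x ^ 2 * y - y ^ 3 : ℝ) : ℂ)
        * ((x ^ 2 - y ^ 2 : ℝ) + 2 * (x : ℂ) * (y : ℂ) * I)
        / (((x ^ 2 + y ^ 2 : ℝ) : ℂ)) ^ 3)
      = ∫ x : ℝ, ((((y + B * x + 3 * x ^ 2 * y - y ^ 3) * (x ^ 2 - y ^ 2)
            / (x ^ 2 + y ^ 2) ^ 3 : ℝ) : ℂ)
        + (((y + B * x + 3 * x ^ 2 * y - y ^ 3) * (2 * x * y)
            / (x ^ 2 + y ^ 2) ^ 3 : ℝ) : ℂ) * I) :=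
        integral_congr_ae (Eventually.of_forall feq)
    _ = (∫ x : ℝ, (((y + B * x + 3 * x ^ 2 * y - y ^ 3) * (x ^ 2 - y ^ 2)
            / (x ^ 2 + y ^ 2) ^ 3 : ℝ) : ℂ))
        + ∫ x : ℝ, (((y + B * x + 3 * x ^ 2 * y - y ^ 3) * (2 * x * y)
            / (x ^ 2 + y ^ 2) ^ 3 : ℝ) : ℂ) * I :=
        integral_add hu.ofReal (hv.ofReal.mul_const I)
    _ = ((∫ x : ℝ, (y + B * x + 3 * x ^ 2 * y - y ^ 3) * (x ^ 2 - y ^ 2)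
            / (x ^ 2 + y ^ 2) ^ 3 : ℝ) : ℂ)
        + ((∫ x : ℝ, (y + B * x + 3 * x ^ 2 * y - y ^ 3) * (2 * x * y)
            / (x ^ 2 + y ^ 2) ^ 3 : ℝ) : ℂ) * I := by
        have h1 := Complex.ofRealCLM.integral_comp_comm hu
        have h2 := Complex.ofRealCLM.integral_comp_comm hv
        simp only [Complex.ofRealCLM_apply] at h1 h2
        rw [integral_mul_const, h1, h2]
    _ = (Real.pi : ℂ) * (I * (B : ℂ) + 4 * (y : ℂ) ^ 2 - 1) / (4 * (y : ℂ) ^ 2) := by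
        rw [hUint, hVint]
        have hyC : (y : ℂ) ≠ 0 := ofReal_ne_zero.mpr hy0
        push_cast
        field_simp
        ring
end

section
/- Let S : ℂ → ℂ be an entire function with S(z + 2π) = S(z) for all z ∈ ℂ. Suppose there exist real numbers a < b such that Im S′(x + ia) ≤ 0 for all x ∈ ℝ and Im S′(x + ib) ≥ 0 for all x ∈ ℝ. Then S is constant. -/
open Complex MeasureTheory

private lemma hasDerivAt_conj_conj {f : ℂ → ℂ} {d : ℂ} (z : ℂ)
    (h : HasDerivAt f d ((starRingEnd ℂ) z)) :
    HasDerivAt (fun w => (starRingEnd ℂ) (f ((starRingEnd ℂ) w))) ((starRingEnd ℂ) d) z := by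
  rw [hasDerivAt_iff_tendsto_slope] at h ⊢
  have hmaps : Set.MapsTo (starRingEnd ℂ) {z}ᶜ {((starRingEnd ℂ) z)}ᶜ := by
    intro w hw hc
    exact hw (by simpa using congrArg (starRingEnd ℂ) hc)
  have h1 : Filter.Tendsto (starRingEnd ℂ) (nhdsWithin z {z}ᶜ)
      (nhdsWithin ((starRingEnd ℂ) z) {((starRingEnd ℂ) z)}ᶜ) :=
    (Complex.continuous_conj.continuousAt.continuousWithinAt).tendsto_nhdsWithin hmaps
  have h2 := (Complex.continuous_conj.tendsto d).comp (h.comp h1)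
  have heq : (fun w => slope (fun w => (starRingEnd ℂ) (f ((starRingEnd ℂ) w))) z w) = ((starRingEnd ℂ) ∘ slope f ((starRingEnd ℂ) z) ∘ (starRingEnd ℂ)) := by
    funext w
    simp only [Function.comp_apply, slope_def_field, map_div₀, map_sub, Complex.conj_conj]
  rw [show slope (fun w => (starRingEnd ℂ) (f ((starRingEnd ℂ) w))) z = fun w => slope (fun w => (starRingEnd ℂ) (f ((starRingEnd ℂ) w))) z w from rfl, heq]
  exact h2

/-- Non-existence of a confining strip for a nontrivial `2π`-periodic entire action:
if `Im S′(x + ia) ≤ 0` and `Im S′(x + ib) ≥ 0` for all real `x`, with `a < b`,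
then `S` is constant. -/
theorem stmt8 (S : ℂ → ℂ) (hS : Differentiable ℂ S)
    (hper : ∀ z : ℂ, S (z + 2 * Real.pi) = S z)
    (a b : ℝ) (hab : a < b)
    (ha : ∀ x : ℝ, (deriv S (x + a * I)).im ≤ 0)
    (hb : ∀ x : ℝ, 0 ≤ (deriv S (x + b * I)).im) :
    ∀ z w : ℂ, S z = S w := by
  set f : ℂ → ℂ := deriv S with hfdef
  have hf : Differentiable ℂ f := by
    have h1 : AnalyticOnNhd ℂ S Set.univ :=
      hS.differentiableOn.analyticOnNhd isOpen_univ
    exact fun z => ((h1.deriv z (Set.mem_univ z)).differentiableAt)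
  -- periodicity of f in the real direction
  have hfper : ∀ z : ℂ, f (z + 2 * Real.pi) = f z := by
    intro z
    have h1 : deriv (fun w => S (w + 2 * Real.pi)) z = deriv S (z + 2 * Real.pi) :=
      deriv_comp_add_const S (2 * Real.pi) z
    rw [hfdef, ← h1]
    congr 1
    exact funext fun w => hper w
  -- derivative along horizontal lines
  have hline : ∀ (c : ℝ) (x : ℝ),
      HasDerivAt (fun t : ℝ => S (t + c * I)) (f ((x : ℂ) + c * I)) x := by
    intro c x
    have h1 : HasDerivAt (fun z : ℂ => S (z + (c : ℂ) * I)) (f ((x : ℂ) + c * I)) (x : ℂ) := by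
      have := ((hS ((x : ℂ) + c * I)).hasDerivAt).comp (x : ℂ)
        ((hasDerivAt_id (x : ℂ)).add_const ((c : ℂ) * I))
      simpa [Function.comp_def, hfdef] using this
    exact h1.comp_ofReal
  have hcont : ∀ c : ℝ, Continuous (fun x : ℝ => f ((x : ℂ) + c * I)) := by
    intro c
    exact hf.continuous.comp (by continuity)
  -- the integral of f over a horizontal period vanishes
  have hintf : ∀ (c : ℝ) (x₀ : ℝ),
      ∫ x in (x₀ - Real.pi)..(x₀ + Real.pi), f ((x : ℂ) + c * I) = 0 := by
    intro c x₀
    rw [show (∫ x in (x₀ - Real.pi)..(x₀ + Real.pi), f ((x : ℂ) + c * I))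
        = S (((x₀ + Real.pi : ℝ) : ℂ) + c * I) - S (((x₀ - Real.pi : ℝ) : ℂ) + c * I) from
      intervalIntegral.integral_eq_sub_of_hasDerivAt (fun x _ => hline c x)
        ((hcont c).intervalIntegrable _ _)]
    have : ((x₀ + Real.pi : ℝ) : ℂ) + c * I = (((x₀ - Real.pi : ℝ) : ℂ) + c * I) + 2 * Real.pi := by
      push_cast; ring
    rw [this, hper]
    ring
  have hintim : ∀ (c : ℝ) (x₀ : ℝ),
      ∫ x in (x₀ - Real.pi)..(x₀ + Real.pi), (f ((x : ℂ) + c * I)).im = 0 := by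
    intro c x₀
    have h1 := Complex.imCLM.intervalIntegral_comp_comm
      (((hcont c).intervalIntegrable (μ := MeasureTheory.volume) (x₀ - Real.pi) (x₀ + Real.pi)))
    simp only [Complex.imCLM_apply] at h1
    rw [h1, hintf c x₀]
    simp
  -- Im f vanishes on both boundary lines
  have hzero : ∀ (c : ℝ), (∀ x : ℝ, (f ((x : ℂ) + c * I)).im ≤ 0) →
      ∀ x : ℝ, (f ((x : ℂ) + c * I)).im = 0 := by
    intro c hc x₀
    by_contra hne
    have hlt : (f ((x₀ : ℂ) + c * I)).im < 0 := lt_of_le_of_ne (hc x₀) hne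
    have hπ : x₀ - Real.pi < x₀ + Real.pi := by
      have := Real.pi_pos; linarith
    have hcc : ContinuousOn (fun x : ℝ => (f ((x : ℂ) + c * I)).im)
        (Set.Icc (x₀ - Real.pi) (x₀ + Real.pi)) :=
      (Complex.continuous_im.comp (hcont c)).continuousOn
    have h2 := intervalIntegral.integral_lt_integral_of_continuousOn_of_le_of_exists_lt
      hπ hcc continuousOn_const (fun x _ => hc x)
      ⟨x₀, ⟨by linarith [Real.pi_pos], by linarith [Real.pi_pos]⟩, hlt⟩
    rw [hintim c x₀] at h2
    simp at h2
  have hima : ∀ x : ℝ, (f ((x : ℂ) + a * I)).im = 0 := hzero a ha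
  have himb : ∀ x : ℝ, (f ((x : ℂ) + b * I)).im = 0 := by
    intro x₀
    by_contra hne
    have hlt : 0 < (f ((x₀ : ℂ) + b * I)).im := lt_of_le_of_ne (hb x₀) (Ne.symm hne)
    have hπ : x₀ - Real.pi < x₀ + Real.pi := by
      have := Real.pi_pos; linarith
    have hcc : ContinuousOn (fun x : ℝ => (f ((x : ℂ) + b * I)).im)
        (Set.Icc (x₀ - Real.pi) (x₀ + Real.pi)) :=
      (Complex.continuous_im.comp (hcont b)).continuousOn
    have h2 := intervalIntegral.integral_lt_integral_of_continuousOn_of_le_of_exists_lt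
      hπ continuousOn_const hcc (fun x _ => hb x)
      ⟨x₀, ⟨by linarith [Real.pi_pos], by linarith [Real.pi_pos]⟩, hlt⟩
    rw [hintim b x₀] at h2
    simp at h2
  -- Schwarz reflection across a line where Im f = 0
  have hrefl : ∀ c : ℝ, (∀ x : ℝ, (f ((x : ℂ) + c * I)).im = 0) →
      ∀ z : ℂ, f ((starRingEnd ℂ) z + 2 * c * I) = (starRingEnd ℂ) (f z) := by
    intro c hc
    set G : ℂ → ℂ := fun z => (starRingEnd ℂ) (f ((starRingEnd ℂ) z + 2 * c * I)) with hGdef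
    have hg : Differentiable ℂ (fun w : ℂ => f (w + 2 * c * I)) :=
      hf.comp (differentiable_id.add_const _)
    have hG : Differentiable ℂ G := by
      intro z
      have := hasDerivAt_conj_conj z ((hg ((starRingEnd ℂ) z)).hasDerivAt)
      exact this.differentiableAt
    have hfA : AnalyticOnNhd ℂ f Set.univ := hf.differentiableOn.analyticOnNhd isOpen_univ
    have hGA : AnalyticOnNhd ℂ G Set.univ := hG.differentiableOn.analyticOnNhd isOpen_univ
    have heqline : ∀ x : ℝ, f ((x : ℂ) + c * I) = G ((x : ℂ) + c * I) := by
      intro x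
      have h1 : (starRingEnd ℂ) ((x : ℂ) + c * I) + 2 * c * I = (x : ℂ) + c * I := by
        simp [Complex.ext_iff]; ring
      rw [hGdef]
      simp only [h1]
      rw [Complex.conj_eq_iff_im.2 (hc x)]
    have hfreq : ∃ᶠ z in nhdsWithin ((c : ℂ) * I) {((c : ℂ) * I)}ᶜ, f z = G z := by
      have ht : Filter.Tendsto (fun n : ℕ => ((1 / (n + 1) : ℝ) : ℂ) + c * I)
          Filter.atTop (nhdsWithin ((c : ℂ) * I) {((c : ℂ) * I)}ᶜ) := by
        rw [tendsto_nhdsWithin_iff]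
        constructor
        · have h0 : Filter.Tendsto (fun n : ℕ => (1 / (n + 1) : ℝ)) Filter.atTop (nhds 0) :=
            tendsto_one_div_add_atTop_nhds_zero_nat
          have h1 := (Complex.continuous_ofReal.tendsto 0).comp h0
          have h2 := h1.add_const ((c : ℂ) * I)
          simpa using h2
        · filter_upwards with n
          simp only [Set.mem_compl_iff, Set.mem_singleton_iff]
          intro hcontra
          have h0 : ((1 / (n + 1 : ℝ) : ℝ) : ℂ) = 0 := by
            nth_rewrite 2 [show ((c : ℂ) * I) = 0 + (c : ℂ) * I by ring] at hcontra
            exact add_right_cancel hcontra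
          rw [Complex.ofReal_eq_zero] at h0
          have hpos : (0:ℝ) < 1 / (n + 1) := by positivity
          linarith
      exact ht.frequently (Filter.Frequently.of_forall fun n => heqline _)
    have hEq := AnalyticOnNhd.eqOn_of_preconnected_of_frequently_eq hfA hGA
      isPreconnected_univ (Set.mem_univ _) hfreq
    intro z
    have := hEq (Set.mem_univ z)
    rw [hGdef] at this
    have := congrArg (starRingEnd ℂ) this
    simpa using this.symm
  -- imaginary period
  have hfperI : ∀ z : ℂ, f (z + (2 * b - 2 * a) * I) = f z := by
    intro z
    have h1 := hrefl a hima z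
    have h3 : (starRingEnd ℂ) ((starRingEnd ℂ) z + 2 * (a : ℂ) * I) + 2 * b * I
        = z + (2 * b - 2 * a) * I := by
      simp only [map_add, Complex.conj_conj, map_mul, Complex.conj_I, map_ofNat,
        Complex.conj_ofReal]
      ring
    have h2 := hrefl b himb ((starRingEnd ℂ) z + 2 * a * I)
    rw [h3, h1] at h2
    simpa using h2
  -- f is doubly periodic, hence bounded, hence constant by Liouville
  have hper1 : Function.Periodic f (2 * Real.pi : ℂ) := fun z => hfper z
  have hper2 : Function.Periodic f (((2 * b - 2 * a : ℝ) : ℂ) * I) := by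
    intro z
    push_cast
    exact hfperI z
  set T : ℝ := 2 * b - 2 * a with hTdef
  have hT : 0 < T := by simp [hTdef]; linarith
  set R : ℝ := (2 * Real.pi + T) with hRdef
  have hrange : Set.range f ⊆ f '' (Metric.closedBall (0 : ℂ) R) := by
    rintro _ ⟨z, rfl⟩
    set m : ℤ := ⌊z.re / (2 * Real.pi)⌋ with hm
    set n : ℤ := ⌊z.im / T⌋ with hn
    set w : ℂ := z - m • (2 * Real.pi : ℂ) - n • (((T : ℝ) : ℂ) * I) with hw
    refine ⟨w, ?_, ?_⟩
    · have h2π : (0:ℝ) < 2 * Real.pi := by positivity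
      have hre : w.re = z.re - m * (2 * Real.pi) := by
        rw [hw, zsmul_eq_mul, zsmul_eq_mul]
        simp
      have him : w.im = z.im - n * T := by
        rw [hw, zsmul_eq_mul, zsmul_eq_mul]
        simp
      have h1 : 0 ≤ z.re - m * (2 * Real.pi) := Int.sub_floor_div_mul_nonneg z.re h2π
      have h2 : z.re - m * (2 * Real.pi) < 2 * Real.pi := Int.sub_floor_div_mul_lt z.re h2π
      have h3 : 0 ≤ z.im - n * T := Int.sub_floor_div_mul_nonneg z.im hT
      have h4 : z.im - n * T < T := Int.sub_floor_div_mul_lt z.im hT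
      rw [Metric.mem_closedBall, dist_zero_right]
      calc ‖w‖ ≤ |w.re| + |w.im| := Complex.norm_le_abs_re_add_abs_im w
        _ ≤ R := by
            rw [hre, him, hRdef, _root_.abs_of_nonneg h1, _root_.abs_of_nonneg h3]
            linarith
    · rw [hw]
      have e1 := hper2.sub_zsmul_eq (x := z - m • (2 * Real.pi : ℂ)) n
      have e2 := hper1.sub_zsmul_eq (x := z) m
      rw [e1, e2]
  have hbdd : Bornology.IsBounded (Set.range f) :=
    (((isCompact_closedBall (0 : ℂ) R).image hf.continuous).isBounded).subset hrange
  have hconstf : ∀ z : ℂ, f z = f 0 := fun z => hf.apply_eq_apply_of_bounded hbdd z 0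
  -- deriv S is the constant c := f 0; show c = 0 and conclude
  set c : ℂ := f 0 with hcdef
  have hS' : ∀ z : ℂ, HasDerivAt (fun w => S w - c * w) 0 z := by
    intro z
    have h1 := (hS z).hasDerivAt
    rw [show deriv S z = c from hconstf z] at h1
    have h2 : HasDerivAt (fun w : ℂ => c * w) c z := by
      simpa using (hasDerivAt_id z).const_mul c
    have h3 : HasDerivAt (fun w => S w - c * w) (c - c) z := h1.sub h2
    rwa [sub_self] at h3
  have hconst : ∀ z w : ℂ, S z - c * z = S w - c * w := by
    intro z w
    exact is_const_of_deriv_eq_zero (fun u => (hS' u).differentiableAt)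
      (fun u => (hS' u).deriv) z w
  have hc0 : c = 0 := by
    have h1 := hconst (2 * Real.pi) 0
    have h2 : S (2 * Real.pi) = S 0 := by simpa using hper 0
    rw [h2] at h1
    have h3 : c * (2 * Real.pi) = 0 := by linear_combination -h1
    have h4 : ((2 * Real.pi : ℝ) : ℂ) ≠ 0 := by
      simp only [ne_eq, Complex.ofReal_eq_zero]
      positivity
    rcases mul_eq_zero.1 h3 with h | h
    · exact h
    · exfalso; apply h4; push_cast; exact h
  intro z w
  have := hconst z w
  rw [hc0] at this
  simpa using this
end

section
/- Let n ≥ 2, let λ₁, …, λₙ ∈ ℂ be pairwise distinct, and let c : {1,…,n}² → ℝ satisfy c(j,k) ≥ 0 and c(j,k) = c(k,j) for all j ≠ k. Then Σ_{j=1}^{n} Σ_{k≠j} c(j,k)·|λⱼ|²·Re((λₖ + λⱼ)/(λₖ − λⱼ)) = −(1/2)·Σ_{j=1}^{n} Σ_{k≠j} c(j,k)·(|λⱼ|² − |λₖ|²)²/|λₖ − λⱼ|², and in particular this quantity is ≤ 0. -/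
open Complex Finset

lemma re_div_key (a b : ℂ) (h : a ≠ b) :
    ((a + b) / (a - b)).re = (‖a‖ ^ 2 - ‖b‖ ^ 2) / ‖a - b‖ ^ 2 := by
  have hd : a - b ≠ 0 := sub_ne_zero.2 h
  rw [Complex.div_re, Complex.sq_norm, Complex.sq_norm, Complex.sq_norm]
  simp only [Complex.normSq_apply, Complex.add_re, Complex.add_im, Complex.sub_re,
    Complex.sub_im]
  ring

lemma swap_sum (n : ℕ) (F : Fin n → Fin n → ℝ) :
    ∑ j, ∑ k ∈ univ \ {j}, F j k = ∑ j, ∑ k ∈ univ \ {j}, F k j := by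
  have key : ∀ G : Fin n → Fin n → ℝ,
      ∑ j, ∑ k ∈ univ \ {j}, G j k = ∑ j, ∑ k, if k ≠ j then G j k else 0 := by
    intro G
    refine Finset.sum_congr rfl fun j _ => ?_
    rw [show univ \ {j} = univ.filter (fun k => k ≠ j) from by ext k; simp,
      Finset.sum_filter]
  rw [key, key]
  rw [Finset.sum_comm]
  refine Finset.sum_congr rfl fun j _ => Finset.sum_congr rfl fun k _ => ?_
  simp [ne_comm]

/-- Symmetrization identity for the gauge-cooling drift: for pairwise distinct
`λ₁, …, λₙ ∈ ℂ` and symmetric nonnegative weights `c(j,k)`,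
`Σⱼ Σ_{k≠j} c(j,k)|λⱼ|² Re((λₖ+λⱼ)/(λₖ−λⱼ))
  = −(1/2) Σⱼ Σ_{k≠j} c(j,k)(|λⱼ|²−|λₖ|²)²/|λₖ−λⱼ|² ≤ 0`. -/
theorem stmt10 (n : ℕ) (hn : 2 ≤ n) (l : Fin n → ℂ) (hdist : Function.Injective l)
    (c : Fin n → Fin n → ℝ)
    (hc : ∀ j k, j ≠ k → 0 ≤ c j k)
    (hsym : ∀ j k, j ≠ k → c j k = c k j) :
    (∑ j, ∑ k ∈ univ \ {j},
        c j k * ‖l j‖ ^ 2 * (((l k + l j) / (l k - l j)).re)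
      = -(1 / 2) * ∑ j, ∑ k ∈ univ \ {j},
        c j k * (‖l j‖ ^ 2 - ‖l k‖ ^ 2) ^ 2
          / ‖l k - l j‖ ^ 2) ∧
    (∑ j, ∑ k ∈ univ \ {j},
        c j k * ‖l j‖ ^ 2 * (((l k + l j) / (l k - l j)).re) ≤ 0) := by
  set f : Fin n → Fin n → ℝ := fun j k =>
    c j k * ‖l j‖ ^ 2 * (((l k + l j) / (l k - l j)).re) with hf
  set g : Fin n → Fin n → ℝ := fun j k =>
    c j k * (‖l j‖ ^ 2 - ‖l k‖ ^ 2) ^ 2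
      / ‖l k - l j‖ ^ 2 with hg
  have hpt : ∀ j k : Fin n, k ≠ j → f j k + f k j = -g j k := by
    intro j k hkj
    have hne : l k ≠ l j := fun h => hkj (hdist h)
    have habs : ‖l k - l j‖ ≠ 0 := by
      simp [sub_eq_zero, hne]
    have habs' : ‖l j - l k‖ = ‖l k - l j‖ := by
      rw [show l j - l k = -(l k - l j) from by ring, norm_neg]
    simp only [hf, hg]
    rw [re_div_key _ _ hne, re_div_key _ _ hne.symm, habs',
      hsym k j hkj]
    field_simp
    ring
  have hswap := swap_sum n f
  have hTpos : 0 ≤ ∑ j, ∑ k ∈ univ \ {j}, g j k := by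
    refine Finset.sum_nonneg fun j _ => Finset.sum_nonneg fun k hk => ?_
    have hkj : k ≠ j := by simpa using (Finset.mem_sdiff.1 hk).2
    exact div_nonneg (mul_nonneg (hc j k hkj.symm) (sq_nonneg _)) (sq_nonneg _)
  have hmain : (∑ j, ∑ k ∈ univ \ {j}, f j k)
      = -(1 / 2) * ∑ j, ∑ k ∈ univ \ {j}, g j k := by
    have h2 : 2 * (∑ j, ∑ k ∈ univ \ {j}, f j k)
        = -(∑ j, ∑ k ∈ univ \ {j}, g j k) := by
      calc 2 * (∑ j, ∑ k ∈ univ \ {j}, f j k)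
          = (∑ j, ∑ k ∈ univ \ {j}, f j k) + ∑ j, ∑ k ∈ univ \ {j}, f k j := by
            rw [← hswap]; ring
        _ = ∑ j, ∑ k ∈ univ \ {j}, (f j k + f k j) := by
            rw [← Finset.sum_add_distrib]
            exact Finset.sum_congr rfl fun j _ => Finset.sum_add_distrib.symm
        _ = ∑ j, ∑ k ∈ univ \ {j}, -(g j k) := by
            refine Finset.sum_congr rfl fun j _ => Finset.sum_congr rfl fun k hk => ?_
            exact hpt j k (by simpa using (Finset.mem_sdiff.1 hk).2)
        _ = -(∑ j, ∑ k ∈ univ \ {j}, g j k) := by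
            simp [Finset.sum_neg_distrib]
    linarith
  exact ⟨hmain, by rw [hmain]; nlinarith⟩
end
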